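/- arXiv:0907.5446 — 3 statements merged into one kernel-verified Lean document; each statement's English description precedes it below -/
import Mathlib

section
/- Let f(x) = x·log x - x + 1. For every γ ∈ (0,1), every r ∈ [γ,1], and every x > 0, one has f(x) ≤ f(r·x + 1 - r) / f(1 - γ). -/
/-!
The function `f` is Mathlib's `klFun`. Since `klFun` is convex with minimum `0` at `1`, the value
`klFun (r * x + 1 - r)` grows as `r` moves away from `0`, so it suffices to treat `r = γ`.
There, with `c = klFun (1 - γ)`, the defect `g y = klFun (γ * y + 1 - γ) - c * klFun y` satisfies
`g 0 = g 1 = g' 1 = 0`, and `g'' y = γ ^ 2 / (γ * y + 1 - γ) - c / y` changes sign exactly once,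
at `y₀ = c * (1 - γ) / (γ * (γ - c))`, which lies in `[0, 1]` because `c ≤ γ ^ 2`. So `g` is
convex on `[y₀, ∞)` with a critical point at `1`, hence nonnegative there, and concave on `[0, y₀]`
with nonnegative values at both ends.
-/

open Real Set InformationTheory

lemma ConvexOn.isMinOn_of_hasDerivAt {S : Set ℝ} {f : ℝ → ℝ} {b : ℝ} (hf : ConvexOn ℝ S f)
    (hb : b ∈ S) (hd : HasDerivAt f 0 b) : IsMinOn f S b := by
  refine isMinOn_iff.2 fun y hy ↦ ?_
  rcases lt_trichotomy y b with hyb | rfl | hby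
  · have h := hf.slope_le_of_hasDerivAt hy hb hyb hd
    rw [slope_def_field, div_le_iff₀ (sub_pos.2 hyb)] at h
    linarith
  · exact le_rfl
  · have h := hf.le_slope_of_hasDerivAt hb hy hby hd
    rw [slope_def_field, le_div_iff₀ (sub_pos.2 hby)] at h
    linarith

lemma nonneg_of_concaveOn_Icc_of_convexOn_Ici {g : ℝ → ℝ} {a b x : ℝ} (hab : a ≤ b)
    (hconc : ConcaveOn ℝ (Icc 0 a) g) (hconv : ConvexOn ℝ (Ici a) g) (hg0 : g 0 = 0)
    (hgb : g b = 0) (hd : HasDerivAt g 0 b) (hx : 0 ≤ x) : 0 ≤ g x := by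
  have hmin := hconv.isMinOn_of_hasDerivAt (mem_Ici.2 hab) hd
  rcases le_or_gt a x with hax | hxa
  · exact hgb ▸ hmin hax
  · have ha : 0 ≤ a := hx.trans hxa.le
    have hga : 0 ≤ g a := hgb ▸ hmin (le_refl a)
    have := hconc.min_le_of_mem_Icc ⟨le_rfl, ha⟩ ⟨ha, le_rfl⟩ ⟨hx, hxa.le⟩
    rw [hg0, min_eq_left hga] at this
    exact this

lemma klFun_pos {x : ℝ} (hx : 0 ≤ x) (hx1 : x ≠ 1) : 0 < klFun x :=
  (klFun_nonneg hx).lt_of_ne' ((klFun_eq_zero_iff hx).not.2 hx1)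

lemma klFun_one_sub_le_sq {γ : ℝ} (hγ : γ < 1) : klFun (1 - γ) ≤ γ ^ 2 := by
  have hlog : log (1 - γ) ≤ -γ := by linarith [log_le_sub_one_of_pos (sub_pos.2 hγ)]
  have := mul_le_mul_of_nonneg_left hlog (sub_pos.2 hγ).le
  rw [klFun_apply]
  nlinarith

lemma klFun_mul_add_one_sub_le {s t x : ℝ} (hs : 0 ≤ s) (hst : s ≤ t)
    (ht : 0 ≤ t * x + 1 - t) : klFun (s * x + 1 - s) ≤ klFun (t * x + 1 - t) := by
  have h1 : klFun 1 ≤ klFun (t * x + 1 - t) := klFun_one ▸ klFun_nonneg ht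
  rcases hs.eq_or_lt with rfl | hs
  · simpa using h1
  have ht0 : 0 < t := hs.trans_le hst
  have hseg : s * x + 1 - s ∈ segment ℝ 1 (t * x + 1 - t) :=
    ⟨1 - s / t, s / t, sub_nonneg.2 ((div_le_one ht0).2 hst), by positivity, by ring, by
      simp only [smul_eq_mul]; field_simp; ring⟩
  exact (convexOn_klFun.le_on_segment (mem_Ici.2 zero_le_one) ht hseg).trans (max_le h1 le_rfl)

noncomputable def klDefect (γ c y : ℝ) : ℝ := klFun (γ * y + 1 - γ) - c * klFun y

section klDefect

variable {γ c y : ℝ}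

lemma continuous_klDefect : Continuous (klDefect γ c) := by
  unfold klDefect
  fun_prop

lemma hasDerivAt_klDefect (hy : y ≠ 0) (hu : γ * y + 1 - γ ≠ 0) :
    HasDerivAt (klDefect γ c) (γ * log (γ * y + 1 - γ) - c * log y) y := by
  have hlin : HasDerivAt (fun z ↦ γ * z + 1 - γ) γ y := by
    simpa using (((hasDerivAt_id y).const_mul γ).add_const 1).sub_const γ
  refine (((hasDerivAt_klFun hu).comp y hlin).sub
    ((hasDerivAt_klFun hy).const_mul c)).congr_deriv ?_
  ring

lemma hasDerivAt_deriv_klDefect (hy : y ≠ 0) (hu : γ * y + 1 - γ ≠ 0) :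
    HasDerivAt (fun z ↦ γ * log (γ * z + 1 - γ) - c * log z)
      (γ ^ 2 / (γ * y + 1 - γ) - c / y) y := by
  have hlin : HasDerivAt (fun z ↦ γ * z + 1 - γ) γ y := by
    simpa using (((hasDerivAt_id y).const_mul γ).add_const 1).sub_const γ
  refine ((((hasDerivAt_log hu).comp y hlin).const_mul γ).sub
    ((hasDerivAt_log hy).const_mul c)).congr_deriv ?_
  field_simp

lemma deriv2_klDefect_nonneg_iff (hγ0 : 0 < γ) (hγ1 : γ < 1) (hcγ : c < γ) (hy : 0 < y) :
    0 ≤ γ ^ 2 / (γ * y + 1 - γ) - c / y ↔ c * (1 - γ) / (γ * (γ - c)) ≤ y := by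
  have hu : 0 < γ * y + 1 - γ := by nlinarith
  rw [sub_nonneg, div_le_div_iff₀ hy hu, div_le_iff₀ (mul_pos hγ0 (sub_pos.2 hcγ))]
  constructor <;> intro h <;> linarith

lemma concaveOn_klDefect (hγ0 : 0 < γ) (hγ1 : γ < 1) (hcγ : c < γ) :
    ConcaveOn ℝ (Icc 0 (c * (1 - γ) / (γ * (γ - c)))) (klDefect γ c) := by
  have hu : ∀ y, 0 < y → γ * y + 1 - γ ≠ 0 := fun y hy ↦ by nlinarith
  refine concaveOn_of_hasDerivWithinAt2_nonpos (convex_Icc _ _) continuous_klDefect.continuousOn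
    (f' := fun z ↦ γ * log (γ * z + 1 - γ) - c * log z)
    (f'' := fun z ↦ γ ^ 2 / (γ * z + 1 - γ) - c / z) ?_ ?_ ?_ <;> simp only [interior_Icc]
  · rintro y ⟨hy0, -⟩
    exact (hasDerivAt_klDefect hy0.ne' (hu y hy0)).hasDerivWithinAt
  · rintro y ⟨hy0, -⟩
    exact (hasDerivAt_deriv_klDefect hy0.ne' (hu y hy0)).hasDerivWithinAt
  · rintro y ⟨hy0, hy⟩
    exact (not_le.1 (mt (deriv2_klDefect_nonneg_iff hγ0 hγ1 hcγ hy0).1 hy.not_ge)).le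

lemma convexOn_klDefect (hγ0 : 0 < γ) (hγ1 : γ < 1) (hc0 : 0 ≤ c) (hcγ : c < γ) :
    ConvexOn ℝ (Ici (c * (1 - γ) / (γ * (γ - c)))) (klDefect γ c) := by
  have hy₀ : 0 ≤ c * (1 - γ) / (γ * (γ - c)) := by
    have := sub_pos.2 hcγ
    have := sub_pos.2 hγ1
    positivity
  have hu : ∀ y, 0 < y → γ * y + 1 - γ ≠ 0 := fun y hy ↦ by nlinarith
  refine convexOn_of_hasDerivWithinAt2_nonneg (convex_Ici _) continuous_klDefect.continuousOn
    (f' := fun z ↦ γ * log (γ * z + 1 - γ) - c * log z)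
    (f'' := fun z ↦ γ ^ 2 / (γ * z + 1 - γ) - c / z) ?_ ?_ ?_ <;> simp only [interior_Ici]
  · intro y hy
    have hy0 := hy₀.trans_lt hy
    exact (hasDerivAt_klDefect hy0.ne' (hu y hy0)).hasDerivWithinAt
  · intro y hy
    have hy0 := hy₀.trans_lt hy
    exact (hasDerivAt_deriv_klDefect hy0.ne' (hu y hy0)).hasDerivWithinAt
  · intro y hy
    exact (deriv2_klDefect_nonneg_iff hγ0 hγ1 hcγ (hy₀.trans_lt hy)).2 hy.le

end klDefect

lemma klFun_one_sub_mul_klFun_le {γ x : ℝ} (hγ0 : 0 < γ) (hγ1 : γ < 1) (hx : 0 ≤ x) :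
    klFun (1 - γ) * klFun x ≤ klFun (γ * x + 1 - γ) := by
  set c := klFun (1 - γ)
  have hc0 : 0 ≤ c := klFun_nonneg (sub_pos.2 hγ1).le
  have hcγ2 : c ≤ γ ^ 2 := klFun_one_sub_le_sq hγ1
  have hcγ : c < γ := hcγ2.trans_lt (by nlinarith)
  have hy₀ : c * (1 - γ) / (γ * (γ - c)) ≤ 1 := by
    rw [div_le_one (mul_pos hγ0 (sub_pos.2 hcγ))]
    nlinarith
  have hd : HasDerivAt (klDefect γ c) 0 1 := by
    simpa using hasDerivAt_klDefect (γ := γ) (c := c) one_ne_zero (by simp)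
  have h := nonneg_of_concaveOn_Icc_of_convexOn_Ici hy₀ (concaveOn_klDefect hγ0 hγ1 hcγ)
    (convexOn_klDefect hγ0 hγ1 hc0 hcγ) (by simp [klDefect, c, klFun_zero])
    (by simp [klDefect, klFun_one]) hd hx
  rw [klDefect] at h
  linarith

theorem f_le_f_div_f (f : ℝ → ℝ) (hf : ∀ x, f x = x * Real.log x - x + 1)
    (γ : ℝ) (hγ0 : 0 < γ) (hγ1 : γ < 1) (r : ℝ) (hr1 : γ ≤ r) (hr2 : r ≤ 1)
    (x : ℝ) (hx : 0 < x) :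
    f x ≤ f (r * x + 1 - r) / f (1 - γ) := by
  obtain rfl : f = klFun := funext fun y ↦ by rw [hf, klFun_apply]; ring
  rw [le_div_iff₀ (klFun_pos (sub_pos.2 hγ1).le (by linarith)), mul_comm]
  calc klFun (1 - γ) * klFun x ≤ klFun (γ * x + 1 - γ) :=
        klFun_one_sub_mul_klFun_le hγ0 hγ1 hx.le
    _ ≤ klFun (r * x + 1 - r) := klFun_mul_add_one_sub_le hγ0.le hr1 (by nlinarith)
end

section
/- Let f(x) = x·log x - x + 1. Then the function γ ↦ (-log(1-γ)) / f(1-γ) on (0,1) attains values arbitrarily close to its infimum h₀, and h₀ satisfies 3 < h₀ < 4. Equivalently: there exists γ ∈ (0,1) with (-log(1-γ)) / (γ + (1-γ)·log(1-γ)) < 4, and for all γ ∈ (0,1), (-log(1-γ)) / (γ + (1-γ)·log(1-γ)) > 3. -/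
/-!
Substitute `1 - γ = exp (-t)` with `t > 0`. The ratio becomes `t * exp t / (exp t - 1 - t)`.
At `t = 1` it equals `e / (e - 2) < 4`, since `e > 8 / 3`. The lower bound `3` says that
`H t = (t - 3) * exp t + 3 * t + 3` is positive for `t > 0`: `H 0 = 0` and
`H' t = (t - 2) * exp t + 3 ≥ 3 - e > 0`, the minimum of `(t - 2) * exp t` being attained
at `t = 1`.
-/

open Real

lemma neg_exp_one_le_sub_two_mul_exp (t : ℝ) : -exp 1 ≤ (t - 2) * exp t := by
  have hle : 2 - t ≤ exp (1 - t) := by linarith [add_one_le_exp (1 - t)]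
  have hprod : exp t * exp (1 - t) = exp 1 := by rw [← exp_add]; ring_nf
  nlinarith [mul_le_mul_of_nonneg_left hle (exp_pos t).le]

lemma strictMono_sub_three_mul_exp_add_three_mul :
    StrictMono fun t => (t - 3) * exp t + 3 * t := by
  have hderiv (t : ℝ) :
      HasDerivAt (fun t => (t - 3) * exp t + 3 * t) ((t - 2) * exp t + 3) t := by
    refine ((((hasDerivAt_id' t).sub_const 3).mul (hasDerivAt_exp t)).add
      ((hasDerivAt_id' t).const_mul 3)).congr_deriv ?_
    ring
  refine strictMono_of_deriv_pos fun t => ?_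
  rw [(hderiv t).deriv]
  linarith [neg_exp_one_le_sub_two_mul_exp t, exp_one_lt_d9]

lemma three_mul_exp_sub_one_sub_lt {t : ℝ} (ht : 0 < t) : 3 * (exp t - 1 - t) < t * exp t := by
  have := strictMono_sub_three_mul_exp_add_three_mul ht
  simp only [zero_sub, exp_zero, mul_zero, add_zero] at this
  linarith

lemma neg_log_div_at_one_sub_exp_neg_eq (t : ℝ) :
    -log (1 - (1 - exp (-t))) /
        ((1 - exp (-t)) + (1 - (1 - exp (-t))) * log (1 - (1 - exp (-t))))
      = t * exp t / (exp t - 1 - t) := by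
  rw [sub_sub_cancel, log_exp, neg_neg,
    show 1 - exp (-t) + exp (-t) * -t = (exp t)⁻¹ * (exp t - 1 - t) by
      rw [exp_neg]; field_simp; ring,
    div_mul_eq_div_div, div_inv_eq_mul]

lemma exists_pos_eq_one_sub_exp_neg {γ : ℝ} (hγ₀ : 0 < γ) (hγ₁ : γ < 1) :
    ∃ t, 0 < t ∧ γ = 1 - exp (-t) := by
  have hx : 0 < 1 - γ := by linarith
  refine ⟨-log (1 - γ), neg_pos.mpr (log_neg hx (by linarith)), ?_⟩
  rw [neg_neg, exp_log hx, sub_sub_cancel]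

theorem h0_bounds :
    (∃ γ : ℝ, 0 < γ ∧ γ < 1 ∧
      (-Real.log (1 - γ)) / (γ + (1 - γ) * Real.log (1 - γ)) < 4) ∧
    (∀ γ : ℝ, 0 < γ → γ < 1 →
      (-Real.log (1 - γ)) / (γ + (1 - γ) * Real.log (1 - γ)) > 3) := by
  constructor
  · have he := exp_one_gt_d9
    refine ⟨1 - exp (-1), by simp, by simp [exp_pos], ?_⟩
    rw [neg_log_div_at_one_sub_exp_neg_eq, div_lt_iff₀ (by linarith)]
    linarith
  · intro γ hγ₀ hγ₁
    obtain ⟨t, ht, rfl⟩ := exists_pos_eq_one_sub_exp_neg hγ₀ hγ₁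
    have hpos : 0 < exp t - 1 - t := by linarith [add_one_lt_exp ht.ne']
    rw [neg_log_div_at_one_sub_exp_neg_eq, gt_iff_lt, lt_div_iff₀ hpos]
    exact three_mul_exp_sub_one_sub_lt ht
end

section
/- Let d ≥ 2. Define h(z) = z·log z + (d-z)·log((d-z)/(d-1)) and g(z) = -log z - (d-1)·log((d-z)/(d-1)) for z ∈ (1,d), and let m_d(y) = g(h⁻¹(y)) for y in the range of h. Then the derivative satisfies m_d'(y) = d·(1 - z⁻¹)/(d·log z - y) > 1/z ≥ 1/d, where z = h⁻¹(y). -/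
/-!
By the inverse function rule, `m_d'(h z) = g'(z) / h'(z)` with
`h'(z) = log z - log ((d - z) / (d - 1)) > 0` and `g'(z) = d (z - 1) / (z (d - z))`, and the
identity `d log z - h z = (d - z) h'(z)` turns this quotient into the stated formula. The bound
`1 / z < m_d'(h z)` becomes `(d - z) h'(z) < d (z - 1)`, which follows from `log z < z - 1` and
`log (1 / u) < 1 / u - 1` for `u = (d - z) / (d - 1)`.
-/

open Real Set Filter Topology Function

section InverseFunction

variable {α β : Type*} [ConditionallyCompleteLinearOrder α] [TopologicalSpace α] [OrderTopology α]
  [DenselyOrdered α] [NoMinOrder α] [NoMaxOrder α]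
  [LinearOrder β] [TopologicalSpace β] [OrderTopology β] {f : α → β} {s : Set α} {x : α}

theorem StrictMonoOn.image_mem_nhds (hf : StrictMonoOn f s) (hc : ContinuousOn f s)
    (hs : s ∈ 𝓝 x) : f '' s ∈ 𝓝 (f x) := by
  obtain ⟨l, u, ⟨hlx, hxu⟩, hlu⟩ := mem_nhds_iff_exists_Ioo_subset.mp hs
  obtain ⟨a, hla, hax⟩ := exists_between hlx
  obtain ⟨b, hxb, hbu⟩ := exists_between hxu
  have hab : Icc a b ⊆ s := (Icc_subset_Ioo hla hbu).trans hlu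
  have hxs : x ∈ s := mem_of_mem_nhds hs
  refine mem_of_superset (Ioo_mem_nhds (hf (hab ⟨le_rfl, (hax.trans hxb).le⟩) hxs hax)
    (hf hxs (hab ⟨(hax.trans hxb).le, le_rfl⟩) hxb)) ?_
  exact (intermediate_value_Ioo (hax.trans hxb).le (hc.mono hab)).trans
    (image_mono (Ioo_subset_Icc_self.trans hab))

theorem StrictMonoOn.continuousAt_invFunOn [Nonempty α] (hf : StrictMonoOn f s)
    (hc : ContinuousOn f s) (hs : s ∈ 𝓝 x) : ContinuousAt (invFunOn f s) (f x) := by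
  have hxs : x ∈ s := mem_of_mem_nhds hs
  have hinv : StrictMonoOn (invFunOn f s) (f '' s) := by
    rintro _ ⟨y₁, hy₁, rfl⟩ _ ⟨y₂, hy₂, rfl⟩ hlt
    rw [hf.injOn.leftInvOn_invFunOn hy₁, hf.injOn.leftInvOn_invFunOn hy₂]
    exact (hf.lt_iff_lt hy₁ hy₂).mp hlt
  refine hinv.continuousAt_of_image_mem_nhds (hf.image_mem_nhds hc hs) ?_
  rwa [hf.injOn.invFunOn_image subset_rfl, hf.injOn.leftInvOn_invFunOn hxs]

end InverseFunction

theorem StrictMonoOn.hasDerivAt_invFunOn {f : ℝ → ℝ} {s : Set ℝ} {x f' : ℝ}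
    (hf : StrictMonoOn f s) (hc : ContinuousOn f s) (hs : s ∈ 𝓝 x) (hfx : HasDerivAt f f' x)
    (hf' : f' ≠ 0) : HasDerivAt (invFunOn f s) f'⁻¹ (f x) := by
  have hleft : invFunOn f s (f x) = x := hf.injOn.leftInvOn_invFunOn (mem_of_mem_nhds hs)
  refine HasDerivAt.of_local_left_inverse (hf.continuousAt_invFunOn hc hs) (hleft ▸ hfx) hf' ?_
  filter_upwards [hf.image_mem_nhds hc hs] with y hy
  exact invFunOn_eq hy

theorem hasDerivAt_mul_log_div {c t : ℝ} (hc : c ≠ 0) (ht : t ≠ 0) :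
    HasDerivAt (fun t => t * log (t / c)) (log (t / c) + 1) t := by
  have hfun : (fun t => t * log (t / c)) = fun t => c * (t / c * log (t / c)) := by
    ext; field_simp
  rw [hfun]
  refine (((hasDerivAt_mul_log (div_ne_zero ht hc)).comp t
    ((hasDerivAt_id t).div_const c)).const_mul c).congr_deriv ?_
  field_simp

noncomputable def mdH (d z : ℝ) : ℝ := z * log z + (d - z) * log ((d - z) / (d - 1))

noncomputable def mdHDeriv (d z : ℝ) : ℝ := log z - log ((d - z) / (d - 1))

noncomputable def mdG (d z : ℝ) : ℝ := -log z - (d - 1) * log ((d - z) / (d - 1))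

variable {d z : ℝ}

theorem hasDerivAt_mdH (hz : z ≠ 0) (hzd : z ≠ d) (hd : d ≠ 1) :
    HasDerivAt (mdH d) (mdHDeriv d z) z := by
  have h₂ := (hasDerivAt_mul_log_div (sub_ne_zero.mpr hd) (sub_ne_zero.mpr hzd.symm)).comp z
    ((hasDerivAt_id z).const_sub d)
  exact ((hasDerivAt_mul_log hz).add h₂).congr_deriv (by unfold mdHDeriv; ring)

theorem continuousOn_mdH : ContinuousOn (mdH d) (Ioo 1 d) := fun _ hx =>
  (hasDerivAt_mdH (by linarith [hx.1]) hx.2.ne (by linarith [hx.1, hx.2])).continuousAt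
    |>.continuousWithinAt

theorem mdHDeriv_pos (hz1 : 1 < z) (hzd : z < d) : 0 < mdHDeriv d z := by
  have : log ((d - z) / (d - 1)) < 0 :=
    log_neg (div_pos (by linarith) (by linarith)) ((div_lt_one (by linarith)).mpr (by linarith))
  unfold mdHDeriv
  linarith [log_pos hz1]

theorem strictMonoOn_mdH : StrictMonoOn (mdH d) (Ioo 1 d) := by
  refine strictMonoOn_of_deriv_pos (convex_Ioo 1 d) continuousOn_mdH fun x hx => ?_
  rw [interior_Ioo] at hx
  rw [(hasDerivAt_mdH (by linarith [hx.1]) hx.2.ne (by linarith [hx.1, hx.2])).deriv]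
  exact mdHDeriv_pos hx.1 hx.2

theorem hasDerivAt_mdG (hz : z ≠ 0) (hzd : z ≠ d) (hd : d ≠ 1) :
    HasDerivAt (mdG d) (d * (z - 1) / (z * (d - z))) z := by
  have hdz : d - z ≠ 0 := sub_ne_zero.mpr hzd.symm
  have hd1 : d - 1 ≠ 0 := sub_ne_zero.mpr hd
  have h₂ := (((hasDerivAt_id z).const_sub d).div_const (d - 1)).log (div_ne_zero hdz hd1)
  exact ((hasDerivAt_log hz).neg.sub (h₂.const_mul (d - 1))).congr_deriv
    (by simp only [id]; field_simp; ring)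

theorem mul_log_sub_mdH (d z : ℝ) : d * log z - mdH d z = (d - z) * mdHDeriv d z := by
  unfold mdH mdHDeriv; ring

theorem mul_log_sub_mdH_lt (hz1 : 1 < z) (hzd : z < d) : d * log z - mdH d z < d * (z - 1) := by
  have hdz : 0 < d - z := by linarith
  have h₁ : log z < z - 1 := log_lt_sub_one_of_pos (by linarith) hz1.ne'
  have h₂ : -log ((d - z) / (d - 1)) < (d - 1) / (d - z) - 1 := by
    rw [← log_inv, inv_div]
    exact log_lt_sub_one_of_pos (div_pos (by linarith) hdz) ((one_lt_div hdz).mpr (by linarith)).ne'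
  have : (d - z) * ((d - 1) / (d - z) - 1) = z - 1 := by field_simp; ring
  rw [mul_log_sub_mdH, mdHDeriv]
  nlinarith

theorem m_d_deriv_general (d : ℝ)
    (g h : ℝ → ℝ)
    (hg : ∀ z, g z = -Real.log z - (d - 1) * Real.log ((d - z) / (d - 1)))
    (hh : ∀ z, h z = z * Real.log z + (d - z) * Real.log ((d - z) / (d - 1)))
    (z : ℝ) (hz : z ∈ Set.Ioo 1 d) :
    HasDerivAt (fun y => g (Function.invFunOn h (Set.Ioo 1 d) y))
      (d * (1 - z⁻¹) / (d * Real.log z - h z)) (h z) ∧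
    1 / z < d * (1 - z⁻¹) / (d * Real.log z - h z) ∧
    1 / d ≤ 1 / z := by
  obtain rfl : g = mdG d := funext hg
  obtain rfl : h = mdH d := funext hh
  obtain ⟨hz1, hzd⟩ := hz
  have hz0 : 0 < z := by linarith
  have hdz : d - z ≠ 0 := by linarith
  have hinv := strictMonoOn_mdH.hasDerivAt_invFunOn continuousOn_mdH (Ioo_mem_nhds hz1 hzd)
    (hasDerivAt_mdH hz0.ne' hzd.ne (by linarith)) (mdHDeriv_pos hz1 hzd).ne'
  have hgap_pos : 0 < d * log z - mdH d z := by
    rw [mul_log_sub_mdH]; exact mul_pos (by linarith) (mdHDeriv_pos hz1 hzd)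
  refine ⟨?_, ?_, one_div_le_one_div_of_le hz0 hzd.le⟩
  · refine ((hasDerivAt_mdG hz0.ne' hzd.ne (by linarith)).comp_of_eq _ hinv
      (strictMonoOn_mdH.injOn.leftInvOn_invFunOn ⟨hz1, hzd⟩).symm).congr_deriv ?_
    rw [mul_log_sub_mdH]
    field_simp
  · rw [lt_div_iff₀ hgap_pos]
    calc 1 / z * (d * log z - mdH d z) < 1 / z * (d * (z - 1)) := by
          gcongr; exact mul_log_sub_mdH_lt hz1 hzd
      _ = d * (1 - z⁻¹) := by field_simp

theorem m_d_deriv (d : ℝ) (hd : 2 ≤ d)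
    (g h : ℝ → ℝ)
    (hg : ∀ z, g z = -Real.log z - (d - 1) * Real.log ((d - z) / (d - 1)))
    (hh : ∀ z, h z = z * Real.log z + (d - z) * Real.log ((d - z) / (d - 1)))
    (z : ℝ) (hz : z ∈ Set.Ioo 1 d) :
    HasDerivAt (fun y => g (Function.invFunOn h (Set.Ioo 1 d) y))
      (d * (1 - z⁻¹) / (d * Real.log z - h z)) (h z) ∧
    1 / z < d * (1 - z⁻¹) / (d * Real.log z - h z) ∧
    1 / d ≤ 1 / z :=
  m_d_deriv_general d g h hg hh z hz
end
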